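/- arXiv:2305.12100 — 4 statements merged into one kernel-verified Lean document; each statement's English description precedes it below -/
import Mathlib

section
/- Let A ∈ ℝ^{N×p} with AA^⊤ invertible, and let A_{-1} ∈ ℝ^{(N-1)×p} be A with its first row removed. For any v ∈ ℝ^N, P_{A_{-1}} A^+ v = A_{-1}^+ v_{-1}, where v_{-1} is v without its first entry, A^+ = A^⊤(AA^⊤)^{-1} and A_{-1}^+ = A_{-1}^⊤(A_{-1}A_{-1}^⊤)^{-1}. -/
open Matrix

/-- Let `A ∈ ℝ^{(N+1)×p}` have linearly independent rows (so `A Aᵀ` is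
invertible, and so is `A₋₁ A₋₁ᵀ` where `A₋₁` is `A` without its first row). Then for any
`v ∈ ℝ^{N+1}`, `P_{A₋₁} A⁺ v = A₋₁⁺ v₋₁`, where `A⁺ = Aᵀ(AAᵀ)⁻¹`, `A₋₁⁺ = A₋₁ᵀ(A₋₁A₋₁ᵀ)⁻¹`,
`P_{A₋₁} = A₋₁ᵀ(A₋₁A₋₁ᵀ)⁻¹A₋₁` is the orthogonal projection onto the row span of `A₋₁`,
and `v₋₁` is `v` without its first entry. -/
theorem stmt1 (N p : ℕ) (A : Matrix (Fin (N + 1)) (Fin p) ℝ)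
    (hA : IsUnit (A * Aᵀ))
    (Am : Matrix (Fin N) (Fin p) ℝ) (hAm : Am = Matrix.of fun i : Fin N => A i.succ)
    (hAmu : IsUnit (Am * Amᵀ))
    (v : Fin (N + 1) → ℝ) :
    (Amᵀ * (Am * Amᵀ)⁻¹ * Am) *ᵥ ((Aᵀ * (A * Aᵀ)⁻¹) *ᵥ v) =
      (Amᵀ * (Am * Amᵀ)⁻¹) *ᵥ (fun i : Fin N => v i.succ) := by
  have hinv : A * Aᵀ * (A * Aᵀ)⁻¹ = 1 :=
    Matrix.mul_nonsing_inv _ ((Matrix.isUnit_iff_isUnit_det _).mp hA)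
  have hAfull : A * (Aᵀ * (A * Aᵀ)⁻¹) = 1 := by rw [← Matrix.mul_assoc, hinv]
  have hmid : Am *ᵥ ((Aᵀ * (A * Aᵀ)⁻¹) *ᵥ v) = fun i : Fin N => v i.succ := by
    funext i
    have h1 : (Am * (Aᵀ * (A * Aᵀ)⁻¹)) i = (1 : Matrix (Fin (N+1)) (Fin (N+1)) ℝ) i.succ := by
      have : (Am * (Aᵀ * (A * Aᵀ)⁻¹)) i = (A * (Aᵀ * (A * Aᵀ)⁻¹)) i.succ := by
        funext j
        simp [Matrix.mul_apply, hAm]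
      rw [this, hAfull]
    rw [Matrix.mulVec_mulVec]
    show (Am * (Aᵀ * (A * Aᵀ)⁻¹)) i ⬝ᵥ v = v i.succ
    rw [h1]
    simp [dotProduct, Matrix.one_apply]
  rw [Matrix.mul_assoc, ← Matrix.mulVec_mulVec, ← Matrix.mulVec_mulVec, hmid, Matrix.mulVec_mulVec]
end

section
/- Let Φ ∈ ℝ^{N×k} with first row φ(z₁), and Φ_{-1} the matrix without the first row. Then ‖P_{Φ_{-1}}^⊥ φ(z₁)‖₂² ≥ λ_min(Φ Φ^⊤), where P_{Φ_{-1}}^⊥ = I − P_{Φ_{-1}} and P_{Φ_{-1}} is the orthogonal projection onto the row span of Φ_{-1}. -/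
/-!
The residual `φ(z₁) - P φ(z₁)` is a combination `uᵀ Φ` of the rows of `Φ` whose first
coefficient is `1`, so `‖u‖² ≥ 1`. Its squared norm is `uᵀ Φ Φᵀ u ≥ λ_min ‖u‖²`, and since
`λ_min ≥ 0` this is at least `λ_min`.
-/

open Matrix

open scoped MatrixOrder in
theorem Matrix.IsHermitian.iInf_eigenvalues_mul_dotProduct_self_le {n : Type*} [Fintype n]
    [DecidableEq n] {A : Matrix n n ℝ} (hA : A.IsHermitian) (u : n → ℝ) :
    (⨅ i, hA.eigenvalues i) * (u ⬝ᵥ u) ≤ u ⬝ᵥ (A *ᵥ u) := by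
  have hle : algebraMap ℝ (Matrix n n ℝ) (⨅ i, hA.eigenvalues i) ≤ A := by
    rw [algebraMap_le_iff_le_spectrum (a := A) hA, hA.spectrum_real_eq_range_eigenvalues]
    rintro _ ⟨i, rfl⟩
    exact ciInf_le (Set.finite_range _).bddBelow i
  have := (Matrix.le_iff.mp hle).dotProduct_mulVec_nonneg u
  rwa [Algebra.algebraMap_eq_smul_one, sub_mulVec, smul_mulVec, one_mulVec, star_trivial,
    dotProduct_sub, dotProduct_smul, smul_eq_mul, sub_nonneg] at this

theorem Matrix.dotProduct_mul_transpose_mulVec {m n R : Type*} [Fintype m] [Fintype n]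
    [CommSemiring R] (Φ : Matrix m n R) (u : m → R) :
    u ⬝ᵥ ((Φ * Φᵀ) *ᵥ u) = (u ᵥ* Φ) ⬝ᵥ (u ᵥ* Φ) := by
  rw [← mulVec_mulVec, dotProduct_mulVec, ← vecMul_transpose, transpose_transpose,
    dotProduct_comm]

theorem Matrix.one_le_cons_one_dotProduct_self {n : ℕ} (c : Fin n → ℝ) :
    1 ≤ vecCons 1 c ⬝ᵥ vecCons 1 c := by
  rw [cons_dotProduct_cons, mul_one, le_add_iff_nonneg_right]
  exact dotProduct_self_star_nonneg c

theorem Matrix.cons_one_neg_vecMul {R : Type*} [Ring R] {N k : ℕ}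
    (Φ : Matrix (Fin (N + 1)) (Fin k) R) (c : Fin N → R) :
    vecCons 1 (-c) ᵥ* Φ = Φ 0 - ∑ i, c i • Φ i.succ := by
  simp [vecMul_eq_sum, Fin.sum_univ_succ, sub_eq_add_neg]

theorem EuclideanSpace.exists_toLp_sub_eq_cons_one_vecMul {𝕜 : Type*} [RCLike 𝕜] {N k : ℕ}
    (Φ : Matrix (Fin (N + 1)) (Fin k) 𝕜) {x : EuclideanSpace 𝕜 (Fin k)}
    (hx : x ∈ Submodule.span 𝕜 (Set.range fun i : Fin N => WithLp.toLp 2 (Φ i.succ))) :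
    ∃ c : Fin N → 𝕜, WithLp.toLp 2 (Φ 0) - x = WithLp.toLp 2 (vecCons 1 c ᵥ* Φ) := by
  obtain ⟨c, rfl⟩ := (Submodule.mem_span_range_iff_exists_fun 𝕜).mp hx
  refine ⟨-c, ?_⟩
  rw [cons_one_neg_vecMul]
  simp

theorem EuclideanSpace.norm_toLp_sq {n : Type*} [Fintype n] (w : n → ℝ) :
    ‖WithLp.toLp 2 w‖ ^ 2 = w ⬝ᵥ w := by
  rw [← real_inner_self_eq_norm_sq, EuclideanSpace.inner_toLp_toLp, star_trivial]

/-- Let `Φ ∈ ℝ^{(N+1)×k}` with first row `φ(z₁) = Φ 0`, and `Φ₋₁` the matrix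
without the first row. Then `‖P_{Φ₋₁}^⊥ φ(z₁)‖² ≥ λ_min(Φ Φᵀ)`, where `P_{Φ₋₁}` is the
orthogonal projection onto the row span of `Φ₋₁` and `λ_min` is the smallest eigenvalue of
the symmetric matrix `Φ Φᵀ`. -/
theorem stmt2 (N k : ℕ) (Φ : Matrix (Fin (N + 1)) (Fin k) ℝ)
    (hH : (Φ * Φᵀ).IsHermitian)
    (S : Submodule ℝ (EuclideanSpace ℝ (Fin k)))
    (hS : S = Submodule.span ℝ
      (Set.range fun i : Fin N => ((WithLp.equiv 2 (Fin k → ℝ)).symm (Φ i.succ))))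
    (v : EuclideanSpace ℝ (Fin k))
    (hv : v = (WithLp.equiv 2 (Fin k → ℝ)).symm (Φ 0)) :
    ⨅ i, hH.eigenvalues i ≤ ‖v - (S.orthogonalProjectionOnto v : EuclideanSpace ℝ (Fin k))‖ ^ 2 := by
  subst hS hv
  obtain ⟨c, hc⟩ := EuclideanSpace.exists_toLp_sub_eq_cons_one_vecMul Φ
    (Submodule.coe_mem (Submodule.orthogonalProjectionOnto _ (WithLp.toLp 2 (Φ 0))))
  set u : Fin (N + 1) → ℝ := vecCons 1 c
  have hmin : 0 ≤ ⨅ i, hH.eigenvalues i :=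
    le_ciInf fun i => (posSemidef_self_mul_conjTranspose Φ).eigenvalues_nonneg i
  calc ⨅ i, hH.eigenvalues i ≤ (⨅ i, hH.eigenvalues i) * (u ⬝ᵥ u) :=
        le_mul_of_one_le_right hmin (one_le_cons_one_dotProduct_self c)
    _ ≤ u ⬝ᵥ ((Φ * Φᵀ) *ᵥ u) := hH.iInf_eigenvalues_mul_dotProduct_self_le u
    _ = ‖WithLp.toLp 2 (u ᵥ* Φ)‖ ^ 2 := by
        rw [EuclideanSpace.norm_toLp_sq, dotProduct_mul_transpose_mulVec]
    _ = _ := congrArg (‖·‖ ^ 2) hc.symm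
end

section
/- Let φ: ℝ^d → ℝ^p be a feature map with invertible kernel K = ΦΦ^⊤ on a training set Z = (z₁,…,z_N), and let θ* = θ₀ + Φ^+(G − Φθ₀) and θ*_{-1} = θ₀ + Φ_{-1}^+(G_{-1} − Φ_{-1}θ₀) be the minimum-norm interpolators with and without the first sample. Then for every z ∈ ℝ^d, f(z,θ*) − f(z,θ*_{-1}) = [φ(z)^⊤ P_{Φ_{-1}}^⊥ φ(z₁) / ‖P_{Φ_{-1}}^⊥ φ(z₁)‖₂²] · (f(z₁,θ*) − f(z₁,θ*_{-1})), where f(z,θ) = φ(z)^⊤θ. -/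
open Matrix

/-- Lemma `proj`: Let `φ : ℝ^d → ℝ^p` be a feature map with invertible kernel
`K = Φ Φᵀ` on the training set `Z = (z₀, …, z_N)` (first sample `z₀ = Z 0`), and let
`θ* = θ₀ + Φ⁺(G − Φθ₀)` and `θ*₋₁ = θ₀ + Φ₋₁⁺(G₋₁ − Φ₋₁θ₀)` be the minimum-norm
interpolators with and without the first sample. Then for every `z`,
`f(z,θ*) − f(z,θ*₋₁) = [φ(z)ᵀ P_{Φ₋₁}^⊥ φ(z₁) / ‖P_{Φ₋₁}^⊥ φ(z₁)‖²] (f(z₁,θ*) − f(z₁,θ*₋₁))`,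
where `f(z,θ) = φ(z)ᵀθ`. -/
theorem stmt4 (d p N : ℕ)
    (φ : (Fin d → ℝ) → (Fin p → ℝ))
    (Z : Fin (N + 1) → Fin d → ℝ)
    (G : Fin (N + 1) → ℝ) (θ₀ : Fin p → ℝ)
    (Φ : Matrix (Fin (N + 1)) (Fin p) ℝ) (hΦ : Φ = Matrix.of fun i => φ (Z i))
    (Φm : Matrix (Fin N) (Fin p) ℝ) (hΦm : Φm = Matrix.of fun i : Fin N => φ (Z i.succ))
    (hK : IsUnit (Φ * Φᵀ)) (hKm : IsUnit (Φm * Φmᵀ))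
    (θs θsm : Fin p → ℝ)
    (hθs : θs = θ₀ + (Φᵀ * (Φ * Φᵀ)⁻¹) *ᵥ (G - Φ *ᵥ θ₀))
    (hθsm : θsm = θ₀ + (Φmᵀ * (Φm * Φmᵀ)⁻¹) *ᵥ ((fun i : Fin N => G i.succ) - Φm *ᵥ θ₀))
    (u : Fin p → ℝ)
    (hu : u = φ (Z 0) - (Φmᵀ * (Φm * Φmᵀ)⁻¹ * Φm) *ᵥ (φ (Z 0))) :
    ∀ z : Fin d → ℝ,
      φ z ⬝ᵥ θs - φ z ⬝ᵥ θsm =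
        (φ z ⬝ᵥ u / (∑ j, u j ^ 2)) * (φ (Z 0) ⬝ᵥ θs - φ (Z 0) ⬝ᵥ θsm) := by
  intro z
  have hKd : IsUnit (Φ * Φᵀ).det := (Matrix.isUnit_iff_isUnit_det _).mp hK
  have hKmd : IsUnit (Φm * Φmᵀ).det := (Matrix.isUnit_iff_isUnit_det _).mp hKm
  have hK1 : Φ * Φᵀ * (Φ * Φᵀ)⁻¹ = 1 := Matrix.mul_nonsing_inv _ hKd
  have hK2 : (Φ * Φᵀ)⁻¹ * (Φ * Φᵀ) = 1 := Matrix.nonsing_inv_mul _ hKd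
  have hKm1 : Φm * Φmᵀ * (Φm * Φmᵀ)⁻¹ = 1 := Matrix.mul_nonsing_inv _ hKmd
  have hKm2 : (Φm * Φmᵀ)⁻¹ * (Φm * Φmᵀ) = 1 := Matrix.nonsing_inv_mul _ hKmd
  set P : Matrix (Fin p) (Fin p) ℝ := Φmᵀ * (Φm * Φmᵀ)⁻¹ * Φm with hP
  have hPΦmT : P * Φmᵀ = Φmᵀ := by
    rw [hP, Matrix.mul_assoc, Matrix.mul_assoc, hKm2, Matrix.mul_one]
  have hΦmP : Φm * P = Φm := by
    rw [hP, ← Matrix.mul_assoc, ← Matrix.mul_assoc, hKm1, Matrix.one_mul]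
  have hdec : ∀ w : Fin (N + 1) → ℝ,
      Φᵀ *ᵥ w = w 0 • φ (Z 0) + Φmᵀ *ᵥ (fun i => w i.succ) := by
    intro w
    funext j
    simp only [Matrix.mulVec, Matrix.transpose_apply, dotProduct, Pi.add_apply,
      Pi.smul_apply, smul_eq_mul, hΦ, hΦm, Matrix.of_apply]
    rw [Fin.sum_univ_succ]
    ring_nf
  have hint : Φ *ᵥ θs = G := by
    rw [hθs, Matrix.mulVec_add, Matrix.mulVec_mulVec, ← Matrix.mul_assoc, hK1,
      Matrix.one_mulVec]
    abel
  have hrow : ∀ (x : Fin p → ℝ), Φm *ᵥ x = fun i => (Φ *ᵥ x) i.succ := by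
    intro x
    funext i
    simp [Matrix.mulVec, hΦ, hΦm]
  have hintm : Φm *ᵥ θsm = fun i : Fin N => G i.succ := by
    rw [hθsm, Matrix.mulVec_add, Matrix.mulVec_mulVec, ← Matrix.mul_assoc, hKm1,
      Matrix.one_mulVec]
    abel
  have hints : Φm *ᵥ θs = fun i : Fin N => G i.succ := by
    rw [hrow, hint]
  have hΦmv : Φm *ᵥ (θs - θsm) = 0 := by
    rw [Matrix.mulVec_sub, hints, hintm, sub_self]
  have hPv : P *ᵥ (θs - θsm) = 0 := by
    rw [hP, ← Matrix.mulVec_mulVec, hΦmv, Matrix.mulVec_zero]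
  have hPfix : ∀ w : Fin N → ℝ, P *ᵥ (Φmᵀ *ᵥ w) = Φmᵀ *ᵥ w := by
    intro w
    rw [Matrix.mulVec_mulVec, hPΦmT]
  have hΦmu : Φm *ᵥ u = 0 := by
    rw [hu, Matrix.mulVec_sub, Matrix.mulVec_mulVec, hΦmP, sub_self]
  obtain ⟨a, ha⟩ : ∃ a, a = (Φ * Φᵀ)⁻¹ *ᵥ (G - Φ *ᵥ θ₀) := ⟨_, rfl⟩
  obtain ⟨b, hb⟩ : ∃ b, b = (Φm * Φmᵀ)⁻¹ *ᵥ ((fun i : Fin N => G i.succ) - Φm *ᵥ θ₀) :=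
    ⟨_, rfl⟩
  have hva : θs - θsm = Φᵀ *ᵥ a - Φmᵀ *ᵥ b := by
    rw [hθs, hθsm, ha, hb, Matrix.mulVec_mulVec, Matrix.mulVec_mulVec]
    abel
  have hkey : θs - θsm = a 0 • u := by
    calc θs - θsm = (θs - θsm) - P *ᵥ (θs - θsm) := by rw [hPv, sub_zero]
    _ = (Φᵀ *ᵥ a - Φmᵀ *ᵥ b) - P *ᵥ (Φᵀ *ᵥ a - Φmᵀ *ᵥ b) := by rw [← hva]
    _ = (a 0 • φ (Z 0) + Φmᵀ *ᵥ (fun i => a i.succ) - Φmᵀ *ᵥ b)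
        - (a 0 • (P *ᵥ φ (Z 0)) + Φmᵀ *ᵥ (fun i => a i.succ) - Φmᵀ *ᵥ b) := by
        rw [hdec a, Matrix.mulVec_sub, Matrix.mulVec_add, Matrix.mulVec_smul,
          hPfix, hPfix]
    _ = a 0 • (φ (Z 0) - P *ᵥ φ (Z 0)) := by rw [smul_sub]; abel
    _ = a 0 • u := by rw [← hu]
  have hsum : (∑ j, u j ^ 2) = u ⬝ᵥ u := by
    simp [dotProduct, sq]
  have huu : u ⬝ᵥ u ≠ 0 := by
    intro h0
    have hu0 : u = 0 := by
      funext j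
      have hnn : ∀ i ∈ Finset.univ, (0:ℝ) ≤ u i ^ 2 := fun i _ => sq_nonneg _
      have := (Finset.sum_eq_zero_iff_of_nonneg hnn).mp (by rw [hsum]; exact h0) j
        (Finset.mem_univ j)
      exact pow_eq_zero_iff (two_ne_zero) |>.mp this
    have hφ0 : φ (Z 0) = P *ᵥ φ (Z 0) := by
      have h := hu
      rw [hu0] at h
      exact sub_eq_zero.mp h.symm
    obtain ⟨c, hc⟩ : ∃ c, c = (Φm * Φmᵀ)⁻¹ *ᵥ (Φm *ᵥ φ (Z 0)) := ⟨_, rfl⟩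
    have hPc : P *ᵥ φ (Z 0) = Φmᵀ *ᵥ c := by
      rw [hP, hc, Matrix.mulVec_mulVec, Matrix.mulVec_mulVec]
    set w : Fin (N + 1) → ℝ := Fin.cons 1 (-c) with hw
    have hΦtw : Φᵀ *ᵥ w = 0 := by
      rw [hdec w]
      have hw0 : w 0 = 1 := rfl
      have hws : (fun i : Fin N => w i.succ) = -c := by
        funext i
        simp [hw]
      rw [hw0, hws, one_smul, Matrix.mulVec_neg, ← hPc, ← hφ0]
      simp
    have hKw : (Φ * Φᵀ) *ᵥ w = 0 := by
      rw [← Matrix.mulVec_mulVec, hΦtw, Matrix.mulVec_zero]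
    have hwz : w = 0 := by
      have h1 : (Φ * Φᵀ)⁻¹ *ᵥ ((Φ * Φᵀ) *ᵥ w) = w := by
        rw [Matrix.mulVec_mulVec, hK2, Matrix.one_mulVec]
      rw [hKw, Matrix.mulVec_zero] at h1
      exact h1.symm
    have h10 : (1:ℝ) = 0 := by
      have := congrFun hwz 0
      simp [hw] at this
    norm_num at h10
  have hzu : φ (Z 0) ⬝ᵥ u = u ⬝ᵥ u := by
    have hvm : u ᵥ* P = 0 := by
      rw [hP, ← Matrix.vecMul_vecMul, ← Matrix.vecMul_vecMul, Matrix.vecMul_transpose,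
        hΦmu]
      simp
    have h2 : (P *ᵥ φ (Z 0)) ⬝ᵥ u = 0 := by
      rw [dotProduct_comm, Matrix.dotProduct_mulVec, hvm, zero_dotProduct]
    have h1 : φ (Z 0) ⬝ᵥ u - u ⬝ᵥ u = (P *ᵥ φ (Z 0)) ⬝ᵥ u := by
      rw [← sub_dotProduct]
      congr 1
      rw [hu]
      abel
    rw [h2] at h1
    linarith
  have hLHS : ∀ x : Fin p → ℝ, x ⬝ᵥ θs - x ⬝ᵥ θsm = a 0 * (x ⬝ᵥ u) := by
    intro x
    rw [← dotProduct_sub, hkey, dotProduct_smul, smul_eq_mul]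
  rw [hLHS (φ z), hLHS (φ (Z 0)), hzu, hsum]
  field_simp
end

section
/- If X ∈ ℝ^{d_x} and Y ∈ ℝ^{d_y} are independent random vectors each satisfying the Lipschitz concentration property, then the concatenated vector Z = [X, Y] ∈ ℝ^{d_x + d_y} also satisfies the Lipschitz concentration property. -/
/-!
Write `f x y = τ [x, y]`, which is `L`-Lipschitz in each argument, and `g x = 𝔼 f x Y`, which is
then `L`-Lipschitz as well. Independence and Fubini give `𝔼 τ Z = 𝔼 g X`, and
`|τ Z - 𝔼 τ Z| ≤ |f X Y - g X| + |g X - 𝔼 g X|`. The second term is controlled by the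
concentration of `X`; the first by that of `Y`, applied for each fixed value of `X`, which is
legitimate because the law of `(X, Y)` is the product of the marginals. This yields the tail
`4 exp (-min c_X c_Y t² / (4 L²))`, and since a probability is at most `1`, the factor `4` is
absorbed by dividing the constant by `8`.

Measurability and integrability come from the concentration property itself: a non-measurable
coordinate would make all the integrals in it vanish, and Gaussian tails make every Lipschitz
observable integrable.
-/

open MeasureTheory

/-- Lipschitz concentration property with constant `c`. -/
def LipConc {Ω E : Type*} [MeasurableSpace Ω] [PseudoMetricSpace E]
    (μ : Measure Ω) (X : Ω → E) (c : ℝ) : Prop :=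
  ∀ (L : NNReal) (τ : E → ℝ), LipschitzWith L τ → ∀ t > 0,
    μ {ω | t < |τ (X ω) - ∫ ω', τ (X ω') ∂μ|} ≤
      ENNReal.ofReal (2 * Real.exp (-(c * t ^ 2) / (L : ℝ) ^ 2))

open ProbabilityTheory Real
open scoped ENNReal NNReal

section Concentration

variable {Ω : Type*} [MeasurableSpace Ω] {μ : Measure Ω}

lemma integrable_of_measure_lt_abs_sub_le [IsFiniteMeasure μ] {f : Ω → ℝ} {m : ℝ}
    {b : ℝ → ℝ} (hf : AEMeasurable f μ) (hb : IntegrableOn b (Set.Ioi 0))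
    (h : ∀ t > 0, μ {ω | t < |f ω - m|} ≤ ENNReal.ofReal (b t)) : Integrable f μ := by
  have hfin : HasFiniteIntegral (fun ω => f ω - m) μ := by
    rw [hasFiniteIntegral_iff_norm]
    simp only [Real.norm_eq_abs]
    rw [lintegral_eq_lintegral_meas_lt μ (ae_of_all _ fun _ => abs_nonneg _)
      (hf.sub_const m).abs]
    exact (setLIntegral_mono' measurableSet_Ioi h).trans_lt hb.lintegral_lt_top
  have hfm : Integrable (fun ω => f ω - m) μ := ⟨(hf.sub_const m).aestronglyMeasurable, hfin⟩
  exact (hfm.add (integrable_const m)).congr (ae_of_all _ fun ω => sub_add_cancel (f ω) m)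

lemma LipConc.integrable_comp [IsProbabilityMeasure μ] {E : Type*} [PseudoMetricSpace E]
    [MeasurableSpace E] [OpensMeasurableSpace E] {X : Ω → E} {c : ℝ} (hc : 0 < c)
    (hX : LipConc μ X c) (hXm : AEMeasurable X μ) {L : ℝ≥0} {τ : E → ℝ}
    (hτ : LipschitzWith L τ) : Integrable (fun ω => τ (X ω)) μ := by
  -- enlarging the constant to `L + 1 > 0` keeps the Gaussian tail bound non-degenerate
  have hτ' : LipschitzWith (L + 1) τ := hτ.weaken le_self_add
  have hL : (0 : ℝ) < (L + 1 : ℝ≥0) := by positivity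
  refine integrable_of_measure_lt_abs_sub_le (hτ.continuous.measurable.comp_aemeasurable hXm)
    (((integrable_exp_neg_mul_sq (div_pos hc (pow_pos hL 2))).const_mul 2).integrableOn)
    fun t ht => (hX _ τ hτ' t ht).trans_eq ?_
  congr 3
  ring

lemma lipschitzWith_coord_add_const {ι : Type*} [Fintype ι] (i : ι) (a : ℝ) :
    LipschitzWith 1 (fun v : EuclideanSpace ℝ ι => v i + a) := by
  have h : LipschitzWith (1 * (1 * 1)) (fun v : EuclideanSpace ℝ ι => v i + a) :=
    (isometry_add_right a).lipschitz.comp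
      ((LipschitzWith.eval (α := fun _ : ι => ℝ) i).comp (PiLp.lipschitzWith_ofLp 2 _))
  rwa [mul_one, mul_one] at h

lemma LipConc.aemeasurable [IsProbabilityMeasure μ] {ι : Type*} [Fintype ι]
    {X : Ω → EuclideanSpace ℝ ι} {c : ℝ} (hc : 0 < c) (hX : LipConc μ X c) :
    AEMeasurable X μ := by
  refine (MeasurableEquiv.toLp 2 (ι → ℝ)).measurable.comp_aemeasurable
    (aemeasurable_pi_lambda _ fun i => ?_)
  by_contra hi
  -- A non-measurable coordinate has non-integrable translates, whose integrals are thus `0`,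
  -- so both `X i + 2t` and `X i - 2t` would concentrate around `0`.
  set t := 2 / √c with ht
  have htpos : 0 < t := by positivity
  have hct : c * t ^ 2 = 4 := by
    rw [ht, div_pow, sq_sqrt hc.le]
    field_simp
    norm_num
  have htail : ∀ a, μ {ω | t < |X ω i + a|} ≤ ENNReal.ofReal (2 * exp (-4)) := fun a => by
    have hint : ∫ ω, (X ω i + a) ∂μ = 0 :=
      integral_undef fun h => hi (by simpa using h.aemeasurable.sub_const a)
    simpa [hint, hct] using hX 1 _ (lipschitzWith_coord_add_const i a) t htpos
  have hcover : Set.univ ⊆ {ω | t < |X ω i + 2 * t|} ∪ {ω | t < |X ω i + -(2 * t)|} := by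
    intro ω _
    by_contra h
    simp only [Set.mem_union, Set.mem_ofPred_eq, not_or, not_lt, abs_le] at h
    linarith [h.1.1, h.2.2]
  have hle : (1 : ℝ≥0∞) ≤ ENNReal.ofReal (2 * exp (-4) + 2 * exp (-4)) := calc
    (1 : ℝ≥0∞) = μ Set.univ := measure_univ.symm
    _ ≤ _ := (measure_mono hcover).trans (measure_union_le _ _)
    _ ≤ _ := add_le_add (htail _) (htail _)
    _ = _ := (ENNReal.ofReal_add (by positivity) (by positivity)).symm
  have hlt : 2 * exp (-4) + 2 * exp (-4) < 1 := by
    have h5 : (5 : ℝ) ≤ exp 4 := by linarith [add_one_le_exp (4 : ℝ)]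
    rw [exp_neg, ← two_mul, ← mul_assoc, ← div_eq_mul_inv, div_lt_one (exp_pos 4)]
    linarith
  exact (ENNReal.ofReal_lt_one.mpr hlt).not_ge hle

lemma lipschitzWith_integral [IsProbabilityMeasure μ] {E : Type*} [PseudoMetricSpace E]
    {f : E → Ω → ℝ} {L : ℝ≥0} (hint : ∀ x, Integrable (f x) μ)
    (hf : ∀ ω, LipschitzWith L (f · ω)) : LipschitzWith L (fun x => ∫ ω, f x ω ∂μ) := by
  refine LipschitzWith.of_dist_le_mul fun x x' => ?_
  rw [Real.dist_eq, ← integral_sub (hint x) (hint x'), ← Real.norm_eq_abs]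
  refine (norm_integral_le_of_norm_le_const (C := L * dist x x')
    (ae_of_all μ fun ω => ?_)).trans_eq (by simp)
  exact dist_eq_norm (f x ω) (f x' ω) ▸ (hf ω).dist_le_mul x x'

end Concentration

section Independence

variable {Ω E F : Type*} [MeasurableSpace Ω] [MeasurableSpace E] [MeasurableSpace F]
  {μ : Measure Ω} [IsProbabilityMeasure μ] {X : Ω → E} {Y : Ω → F}

lemma ProbabilityTheory.IndepFun.measure_mem_le_of_forall_slice (hXm : AEMeasurable X μ)
    (hYm : AEMeasurable Y μ) (hind : IndepFun X Y μ) {T : Set (E × F)} (hT : MeasurableSet T)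
    {ε : ℝ≥0∞} (h : ∀ x, μ {ω | (x, Y ω) ∈ T} ≤ ε) : μ {ω | (X ω, Y ω) ∈ T} ≤ ε := by
  have : IsProbabilityMeasure (μ.map X) := Measure.isProbabilityMeasure_map hXm
  have : IsProbabilityMeasure (μ.map Y) := Measure.isProbabilityMeasure_map hYm
  calc μ {ω | (X ω, Y ω) ∈ T}
      = ∫⁻ x, μ.map Y (Prod.mk x ⁻¹' T) ∂μ.map X := by
        rw [← Measure.prod_apply hT, ← hind.map_prod_eq_prod_map_map hXm hYm,
          Measure.map_apply_of_aemeasurable (hXm.prodMk hYm) hT]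
        rfl
    _ ≤ ∫⁻ _, ε ∂μ.map X := lintegral_mono fun x => by
        rw [Measure.map_apply_of_aemeasurable hYm (measurable_prodMk_left hT)]
        exact h x
    _ = ε := by simp

lemma ProbabilityTheory.IndepFun.integral_comp_eq_integral_integral (hXm : AEMeasurable X μ)
    (hYm : AEMeasurable Y μ) (hind : IndepFun X Y μ) {f : E → F → ℝ}
    (hf : StronglyMeasurable (Function.uncurry f))
    (hint : Integrable (fun ω => f (X ω) (Y ω)) μ) :
    ∫ ω, f (X ω) (Y ω) ∂μ = ∫ ω, ∫ ω', f (X ω) (Y ω') ∂μ ∂μ := by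
  have : IsProbabilityMeasure (μ.map X) := Measure.isProbabilityMeasure_map hXm
  have : IsProbabilityMeasure (μ.map Y) := Measure.isProbabilityMeasure_map hYm
  have hprod := hind.map_prod_eq_prod_map_map hXm hYm
  have hWm := hXm.prodMk hYm
  calc ∫ ω, f (X ω) (Y ω) ∂μ = ∫ p, Function.uncurry f p ∂(μ.map X).prod (μ.map Y) := by
        rw [← hprod, integral_map hWm hf.aestronglyMeasurable]
        rfl
    _ = ∫ x, ∫ y, f x y ∂μ.map Y ∂μ.map X := by
        refine integral_prod _ ?_
        rw [← hprod]
        exact (integrable_map_measure hf.aestronglyMeasurable hWm).mpr hint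
    _ = ∫ ω, ∫ y, f (X ω) y ∂μ.map Y ∂μ :=
        integral_map hXm hf.integral_prod_right.aestronglyMeasurable
    _ = ∫ ω, ∫ ω', f (X ω) (Y ω') ∂μ ∂μ := by
        congr 1 with ω
        exact integral_map hYm (hf.comp_measurable measurable_prodMk_left).aestronglyMeasurable

end Independence

section SeparatelyLipschitz

variable {Ω E F : Type*} [MeasurableSpace Ω] {μ : Measure Ω} [IsProbabilityMeasure μ]
  [PseudoMetricSpace E] [MeasurableSpace E] [OpensMeasurableSpace E]
  [PseudoMetricSpace F] [MeasurableSpace F] [OpensMeasurableSpace F]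
  [SecondCountableTopologyEither E F]
  {X : Ω → E} {Y : Ω → F} {cX cY : ℝ} {f : E → F → ℝ} {L : ℝ≥0}

lemma LipConc.integrable_comp₂ (hcX : 0 < cX) (hcY : 0 < cY) (hX : LipConc μ X cX)
    (hY : LipConc μ Y cY) (hXm : AEMeasurable X μ) (hYm : AEMeasurable Y μ)
    (hfx : ∀ y, LipschitzWith L (f · y)) (hfy : ∀ x, LipschitzWith L (f x)) :
    Integrable (fun ω => f (X ω) (Y ω)) μ := by
  obtain ⟨ω₀⟩ := nonempty_of_isProbabilityMeasure μ
  have hd : Integrable (fun ω => dist (X ω) (X ω₀)) μ :=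
    hX.integrable_comp hcX hXm (LipschitzWith.dist_left _)
  have h₀ : Integrable (fun ω => f (X ω₀) (Y ω)) μ := hY.integrable_comp hcY hYm (hfy _)
  have hm : AEStronglyMeasurable (fun ω => f (X ω) (Y ω)) μ :=
    ((LipschitzWith.uncurry hfx hfy).continuous.measurable.comp_aemeasurable
      (hXm.prodMk hYm)).aestronglyMeasurable
  refine (h₀.norm.add (hd.const_mul L)).mono' hm (ae_of_all _ fun ω => ?_)
  calc ‖f (X ω) (Y ω)‖ ≤ ‖f (X ω₀) (Y ω)‖ + ‖f (X ω) (Y ω) - f (X ω₀) (Y ω)‖ :=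
        norm_le_insert' _ _
    _ ≤ ‖f (X ω₀) (Y ω)‖ + L * dist (X ω) (X ω₀) := by
        gcongr
        exact dist_eq_norm (f (X ω) (Y ω)) _ ▸ (hfx (Y ω)).dist_le_mul _ _

theorem ProbabilityTheory.IndepFun.measure_lt_abs_sub_integral_le (hcX : 0 < cX) (hcY : 0 < cY)
    (hX : LipConc μ X cX) (hY : LipConc μ Y cY) (hXm : AEMeasurable X μ)
    (hYm : AEMeasurable Y μ) (hind : IndepFun X Y μ)
    (hfx : ∀ y, LipschitzWith L (f · y)) (hfy : ∀ x, LipschitzWith L (f x)) {t : ℝ} (ht : 0 < t) :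
    μ {ω | t < |f (X ω) (Y ω) - ∫ ω', f (X ω') (Y ω') ∂μ|} ≤
      ENNReal.ofReal (2 * exp (-(cY * (t / 2) ^ 2) / L ^ 2)) +
        ENNReal.ofReal (2 * exp (-(cX * (t / 2) ^ 2) / L ^ 2)) := by
  set g : E → ℝ := fun x => ∫ ω, f x (Y ω) ∂μ
  have hg : LipschitzWith L g :=
    lipschitzWith_integral (fun x => hY.integrable_comp hcY hYm (hfy x)) fun ω => hfx (Y ω)
  have hf : Continuous (Function.uncurry f) := (LipschitzWith.uncurry hfx hfy).continuous
  have hmean : ∫ ω, f (X ω) (Y ω) ∂μ = ∫ ω, g (X ω) ∂μ :=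
    hind.integral_comp_eq_integral_integral hXm hYm hf.measurable.stronglyMeasurable
      (hX.integrable_comp₂ hcX hcY hY hXm hYm hfx hfy)
  set T : Set (E × F) := {p | t / 2 < |f p.1 p.2 - g p.1|}
  have hT : MeasurableSet T :=
    measurableSet_lt measurable_const (hf.sub (hg.continuous.comp continuous_fst)).abs.measurable
  have hsub : {ω | t < |f (X ω) (Y ω) - ∫ ω', f (X ω') (Y ω') ∂μ|} ⊆
      {ω | (X ω, Y ω) ∈ T} ∪ {ω | t / 2 < |g (X ω) - ∫ ω', g (X ω') ∂μ|} := by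
    intro ω hω
    by_contra h
    simp only [T, Set.mem_union, Set.mem_ofPred_eq, not_or, not_lt] at h hω
    rw [hmean] at hω
    linarith [abs_sub_le (f (X ω) (Y ω)) (g (X ω)) (∫ ω', g (X ω') ∂μ)]
  calc _ ≤ _ := measure_mono hsub
    _ ≤ _ := measure_union_le _ _
    _ ≤ _ := add_le_add
        (hind.measure_mem_le_of_forall_slice hXm hYm hT fun x =>
          hY L (f x) (hfy x) _ (half_pos ht))
        (hX L g hg _ (half_pos ht))

end SeparatelyLipschitz

namespace EuclideanSpace

noncomputable def sumElim {α β : Type*} (x : EuclideanSpace ℝ α) (y : EuclideanSpace ℝ β) :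
    EuclideanSpace ℝ (α ⊕ β) :=
  (WithLp.equiv 2 ((α ⊕ β) → ℝ)).symm
    (Sum.elim ((WithLp.equiv 2 (α → ℝ)) x) ((WithLp.equiv 2 (β → ℝ)) y))

variable {α β : Type*} [Fintype α] [Fintype β]

lemma isometry_sumElim_left (y : EuclideanSpace ℝ β) :
    Isometry fun x : EuclideanSpace ℝ α => sumElim x y :=
  Isometry.of_dist_eq fun x x' => by
    simp [EuclideanSpace.dist_eq, Fintype.sum_sum_type, sumElim]

lemma isometry_sumElim_right (x : EuclideanSpace ℝ α) :
    Isometry fun y : EuclideanSpace ℝ β => sumElim x y :=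
  Isometry.of_dist_eq fun y y' => by
    simp [EuclideanSpace.dist_eq, Fintype.sum_sum_type, sumElim]

end EuclideanSpace

lemma le_ofReal_two_mul_exp_neg {m : ℝ≥0∞} {x : ℝ} (h₁ : m ≤ 1)
    (h₄ : m ≤ ENNReal.ofReal (4 * exp (-(2 * x)))) : m ≤ ENNReal.ofReal (2 * exp (-x)) := by
  rcases le_or_gt (1 / 2) (exp (-x)) with hx | hx
  · exact h₁.trans (ENNReal.one_le_ofReal.mpr (by linarith))
  · refine h₄.trans (ENNReal.ofReal_le_ofReal ?_)
    rw [show -(2 * x) = -x + -x by ring, exp_add]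
    nlinarith [exp_pos (-x)]

/-- If `X ∈ ℝ^{d_x}` and `Y ∈ ℝ^{d_y}` are independent random vectors each
satisfying the Lipschitz concentration property, then the concatenated vector
`Z = [X, Y] ∈ ℝ^{d_x + d_y}` also satisfies the Lipschitz concentration property. -/
theorem stmt10 {Ω : Type*} [MeasurableSpace Ω] (μ : Measure Ω) [IsProbabilityMeasure μ]
    (dx dy : ℕ)
    (X : Ω → EuclideanSpace ℝ (Fin dx)) (Y : Ω → EuclideanSpace ℝ (Fin dy))
    (hX : ∃ c > 0, LipConc μ X c) (hY : ∃ c > 0, LipConc μ Y c)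
    (hindep : ProbabilityTheory.IndepFun X Y μ)
    (Z : Ω → EuclideanSpace ℝ (Fin dx ⊕ Fin dy))
    (hZ : ∀ ω, Z ω = (WithLp.equiv 2 ((Fin dx ⊕ Fin dy) → ℝ)).symm
      (Sum.elim ((WithLp.equiv 2 (Fin dx → ℝ)) (X ω)) ((WithLp.equiv 2 (Fin dy → ℝ)) (Y ω)))) :
    ∃ c > 0, LipConc μ Z c := by
  obtain ⟨cX, hcX, hXc⟩ := hX
  obtain ⟨cY, hcY, hYc⟩ := hY
  refine ⟨min cX cY / 8, by positivity, fun L τ hτ t ht => ?_⟩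
  obtain rfl : Z = fun ω => EuclideanSpace.sumElim (X ω) (Y ω) := funext hZ
  have hbound := hindep.measure_lt_abs_sub_integral_le hcX hcY hXc hYc (hXc.aemeasurable hcX)
    (hYc.aemeasurable hcY) (f := fun x y => τ (EuclideanSpace.sumElim x y))
    (fun y => mul_one L ▸ hτ.comp (EuclideanSpace.isometry_sumElim_left y).lipschitz)
    (fun x => mul_one L ▸ hτ.comp (EuclideanSpace.isometry_sumElim_right x).lipschitz) ht
  have hexp : ∀ c ≥ min cX cY, exp (-(c * (t / 2) ^ 2) / L ^ 2) ≤
      exp (-(2 * (min cX cY / 8 * t ^ 2 / L ^ 2))) := fun c hc => by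
    rw [exp_le_exp, neg_div, neg_le_neg_iff]
    calc 2 * (min cX cY / 8 * t ^ 2 / L ^ 2) = min cX cY * (t / 2) ^ 2 / L ^ 2 := by ring
      _ ≤ c * (t / 2) ^ 2 / L ^ 2 := by gcongr
  rw [neg_div]
  refine le_ofReal_two_mul_exp_neg prob_le_one (hbound.trans ?_)
  rw [← ENNReal.ofReal_add (by positivity) (by positivity)]
  gcongr
  linarith [hexp cX (min_le_left _ _), hexp cY (min_le_right _ _)]
end
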